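/- arXiv:1111.1084 — 4 statements merged into one kernel-verified Lean document; each statement's English description precedes it below -/
import Mathlib

section
/- Let A = (e_{ij}) be an (n+1)×n matrix with entries in ℤ ∪ {−∞}, indexed by rows 0,…,n and columns 1,…,n. For i = 0,…,n let J_i denote the Jacobi number (maximal diagonal sum over permutations) of the n×n matrix A_î obtained by deleting row i. If J_i ≥ 0 for all i, then the vector (k_0,…,k_n) = (J_0,…,J_n) satisfies the equality k_0 + k_1 + ⋯ + k_n = Σ_{j=1}^{n} max(e_{0j}+k_0, e_{1j}+k_1, …, e_{nj}+k_n), where the max and sums are computed in ℤ ∪ {−∞} with the convention (−∞) + k = −∞. -/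
/-!
Expanding `J 0` along an optimal permutation gives `∑ᵢ J i ≤ ∑ⱼ maxᵢ (A i j + J i)`. Conversely,
let row `f j` attain the maximum in column `j`. The entry `(f j, j)` together with an optimal
permutation for `J (f j)` assigns every row to a column of the square matrix `[A | 0]`; these `n`
assignments, plus the one sending every row to the zero column, hit each column exactly `n + 1`
times. By Birkhoff's theorem their incidence matrix is a nonnegative combination of permutation
matrices supported on it, and a permutation sending row `i` to the zero column has diagonal sum at
most `J i`. Since every row goes to the zero column exactly once, this bounds
`∑ⱼ (A (f j) j + J (f j))` by `∑ᵢ J i`.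
-/

open Finset Equiv

variable {α M : Type*} {n : ℕ}

theorem Equiv.Perm.permMatrix_apply {ι : Type*} (R : Type*) [DecidableEq ι] [Zero R] [One R]
    (σ : Perm ι) (i j : ι) : σ.permMatrix R i j = if σ i = j then 1 else 0 := by
  simp [Perm.permMatrix, PEquiv.toMatrix_apply, toPEquiv_apply]

theorem sum_sum_smul_permMatrix_mul {ι R : Type*} [Fintype ι] [DecidableEq ι] [Semiring R]
    (w : Perm ι → R) (x : ι → ι → R) :
    ∑ r, ∑ c, (∑ π, w π • π.permMatrix R) r c * x r c = ∑ π, w π * ∑ r, x r (π r) := by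
  simp only [Matrix.sum_apply, Matrix.smul_apply, smul_eq_mul, Perm.permMatrix_apply, mul_ite,
    mul_one, mul_zero, ite_mul, zero_mul, sum_mul, mul_sum]
  conv_lhs => enter [2, r]; rw [sum_comm]
  rw [sum_comm]
  simp

section Incidence

variable {ι T R : Type*} [Fintype ι] [DecidableEq ι] [Fintype T]

theorem sum_sum_apply_eq_sum_sum_card_mul [Semiring R] (φ : T → ι → ι) (x : ι → ι → R) :
    ∑ t, ∑ r, x r (φ t r) = ∑ r, ∑ c, (#{t | φ t r = c} : R) * x r c := by
  simp only [natCast_card_filter, ite_mul, one_mul, zero_mul, sum_mul]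
  conv_rhs => enter [2, r]; rw [sum_comm]
  rw [sum_comm]
  simp

theorem exists_mem_doublyStochastic_card_smul_eq [Field R] [LinearOrder R] [IsStrictOrderedRing R]
    (φ : T → ι → ι) (hφ : ∀ c, ∑ t, #{r | φ t r = c} = Fintype.card T) :
    ∃ D ∈ doublyStochastic R ι,
      Matrix.of (fun r c => (#{t | φ t r = c} : R)) = (Fintype.card T : R) • D := by
  refine (exists_mem_doublyStochastic_eq_smul_iff (Nat.cast_nonneg _)).2
    ⟨fun r c => Nat.cast_nonneg _, fun r => ?_, fun c => ?_⟩
  · simp only [Matrix.of_apply]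
    exact_mod_cast (card_eq_sum_card_fiberwise fun t _ => mem_univ (φ t r)).symm
  · have := congrArg (Nat.cast (R := R)) (hφ c)
    push_cast [natCast_card_filter] at this
    simp only [Matrix.of_apply, natCast_card_filter]
    rwa [sum_comm]

/-- The graphs of the maps `φ t` form a `card T`-regular bipartite multigraph, which Birkhoff's
theorem splits into perfect matchings, each contained in it. -/
theorem sum_sum_le_of_forall_perm [Field R] [LinearOrder R] [IsStrictOrderedRing R]
    (φ : T → ι → ι) (hφ : ∀ c, ∑ t, #{r | φ t r = c} = Fintype.card T) {v u : ι → ι → R}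
    (h : ∀ π : Perm ι, (∀ r, ∃ t, φ t r = π r) → ∑ r, v r (π r) ≤ ∑ r, u r (π r)) :
    ∑ t, ∑ r, v r (φ t r) ≤ ∑ t, ∑ r, u r (φ t r) := by
  rcases isEmpty_or_nonempty T with _ | _
  · simp
  obtain ⟨D, hD, hφD⟩ := exists_mem_doublyStochastic_card_smul_eq (R := R) φ hφ
  obtain ⟨w, hw, -, rfl⟩ := exists_eq_sum_perm_of_mem_doublyStochastic hD
  have hN (r c : ι) :
      (#{t | φ t r = c} : R) = ((Fintype.card T : R) • ∑ π, w π • π.permMatrix R) r c :=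
    congrFun₂ hφD r c
  have hsum (x : ι → ι → R) :
      ∑ t, ∑ r, x r (φ t r) = Fintype.card T * ∑ π, w π * ∑ r, x r (π r) := by
    simp only [sum_sum_apply_eq_sum_sum_card_mul, hN, Matrix.smul_apply, smul_eq_mul, mul_assoc,
      ← mul_sum, sum_sum_smul_permMatrix_mul]
  have hcover (π : Perm ι) (hπ : 0 < w π) (r : ι) : ∃ t, φ t r = π r := by
    have hle : w π ≤ ∑ σ : Perm ι, if σ r = π r then w σ else 0 := by
      simpa using single_le_sum (f := fun σ : Perm ι => if σ r = π r then w σ else 0)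
        (fun σ _ => by split_ifs <;> simp [hw]) (mem_univ π)
    have hpos : (0 : R) < #{t | φ t r = π r} := by
      rw [hN]
      simp only [Matrix.smul_apply, Matrix.sum_apply, smul_eq_mul, Perm.permMatrix_apply,
        mul_ite, mul_one, mul_zero]
      exact mul_pos (Nat.cast_pos.2 Fintype.card_pos) (hπ.trans_le hle)
    obtain ⟨t, ht⟩ := card_pos.1 (Nat.cast_pos.1 hpos)
    exact ⟨t, (mem_filter.1 ht).2⟩
  rw [hsum, hsum]
  refine mul_le_mul_of_nonneg_left (sum_le_sum fun π _ => ?_) (Nat.cast_nonneg _)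
  rcases (hw π).eq_or_lt with hπ | hπ
  · simp [← hπ]
  · exact mul_le_mul_of_nonneg_left (h π (hcover π hπ)) hπ.le

end Incidence

theorem WithBot.coe_sum_unbotD [AddCommMonoid M] (d : M) {s : Finset α} {g : α → WithBot M}
    (hg : ∀ i ∈ s, g i ≠ ⊥) : ((∑ i ∈ s, (g i).unbotD d : M) : WithBot M) = ∑ i ∈ s, g i := by
  push_cast
  refine sum_congr rfl fun i hi => ?_
  lift g i to M using hg i hi with x
  rfl

theorem WithBot.sum_sum_le_of_forall_perm {ι T : Type*} [Fintype ι] [DecidableEq ι] [Fintype T]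
    (φ : T → ι → ι) (hφ : ∀ c, ∑ t, #{r | φ t r = c} = Fintype.card T)
    {V : ι → ι → WithBot ℤ} {u : ι → ι → ℤ}
    (h : ∀ π : Perm ι, ∑ r, V r (π r) ≤ ∑ r, (u r (π r) : WithBot ℤ)) :
    ∑ t, ∑ r, V r (φ t r) ≤ ∑ t, ∑ r, (u r (φ t r) : WithBot ℤ) := by
  by_cases hV : ∃ t r, V r (φ t r) = ⊥
  · obtain ⟨t, r, htr⟩ := hV
    have : ∑ t, ∑ r, V r (φ t r) = ⊥ :=
      sum_eq_bot_iff.2 ⟨t, mem_univ t, sum_eq_bot_iff.2 ⟨r, mem_univ r, htr⟩⟩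
    simp [this]
  push Not at hV
  let v (r c : ι) : ℤ := (V r c).unbotD 0
  have hv {s : Finset ι} {ρ : ι → ι} (hρ : ∀ r, ∃ t, φ t r = ρ r) :
      ((∑ r ∈ s, v r (ρ r) : ℤ) : WithBot ℤ) = ∑ r ∈ s, V r (ρ r) :=
    coe_sum_unbotD 0 fun r _ => by obtain ⟨t, ht⟩ := hρ r; rw [← ht]; exact hV t r
  have hq := _root_.sum_sum_le_of_forall_perm (R := ℚ) φ hφ (v := fun r c => v r c)
    (u := fun r c => u r c) fun π hπ => by exact_mod_cast (hv hπ).trans_le (h π)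
  calc ∑ t, ∑ r, V r (φ t r) = ((∑ t, ∑ r, v r (φ t r) : ℤ) : WithBot ℤ) := by
        rw [WithBot.coe_sum]
        exact sum_congr rfl fun t _ => (hv fun _ => ⟨t, rfl⟩).symm
    _ ≤ ((∑ t, ∑ r, u r (φ t r) : ℤ) : WithBot ℤ) := by exact_mod_cast hq
    _ = ∑ t, ∑ r, (u r (φ t r) : WithBot ℤ) := by push_cast; rfl

theorem Fin.sum_apply_insertNth [AddCommMonoid M] (B : Fin (n + 1) → α → M) (p : Fin (n + 1))
    (a : α) (g : Fin n → α) :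
    ∑ r, B r (Fin.insertNth (α := fun _ => α) p a g r) = B p a + ∑ k, B (p.succAbove k) (g k) := by
  simp [Fin.sum_univ_succAbove _ p]

theorem Fin.card_filter_insertNth_eq [DecidableEq α] (p : Fin (n + 1)) (a : α) (g : Fin n → α)
    (y : α) :
    #{r | Fin.insertNth (α := fun _ => α) p a g r = y} =
      #{k | g k = y} + if a = y then 1 else 0 := by
  simp only [card_filter]
  rw [Fin.sum_univ_succAbove _ p]
  simp [add_comm]

theorem Equiv.Perm.exists_castSucc_eq_succAbove (π : Perm (Fin (n + 1))) :
    ∃ τ : Perm (Fin n), ∀ k, (τ k).castSucc = π ((π.symm (Fin.last n)).succAbove k) := by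
  have hne (k : Fin n) : π ((π.symm (Fin.last n)).succAbove k) ≠ Fin.last n := by
    rw [Ne, ← π.eq_symm_apply]
    exact Fin.succAbove_ne _ _
  have hinj :
      Function.Injective fun k => (π ((π.symm (Fin.last n)).succAbove k)).castPred (hne k) :=
    fun k l hkl => Fin.succAbove_right_injective (π.injective (Fin.castPred_inj.1 hkl))
  exact ⟨.ofBijective _ (Finite.injective_iff_bijective.1 hinj),
    fun k => Fin.castSucc_castPred _ (hne k)⟩

theorem sum_snoc_zero_le [AddCommMonoid M] [LE M] (A : Matrix (Fin (n + 1)) (Fin n) M)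
    (J : Fin (n + 1) → M) (hJ : ∀ i (τ : Perm (Fin n)), ∑ k, A (i.succAbove k) (τ k) ≤ J i)
    (π : Perm (Fin (n + 1))) :
    ∑ r, Fin.snoc (α := fun _ => M) (A r) 0 (π r) ≤ J (π.symm (Fin.last n)) := by
  obtain ⟨τ, hτ⟩ := π.exists_castSucc_eq_succAbove
  rw [Fin.sum_univ_succAbove _ (π.symm (Fin.last n))]
  simpa [← hτ] using hJ _ τ

/-- Member `j < n` matches row `f j` to column `j` and the other rows along `σ (f j)`; the last
member sends every row to the extra column `n`. -/
def columnFamily (f : Fin n → Fin (n + 1)) (σ : Fin (n + 1) → Perm (Fin n)) :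
    Fin (n + 1) → Fin (n + 1) → Fin (n + 1) :=
  Fin.snoc (α := fun _ => Fin (n + 1) → Fin (n + 1))
    (fun j r => (Fin.insertNth (α := fun _ => Fin n) (f j) j (σ (f j)) r).castSucc)
    (fun _ => Fin.last n)

theorem sum_card_columnFamily (f : Fin n → Fin (n + 1)) (σ : Fin (n + 1) → Perm (Fin n))
    (c : Fin (n + 1)) : ∑ t, #{r | columnFamily f σ t r = c} = Fintype.card (Fin (n + 1)) := by
  rw [Fin.sum_univ_castSucc]
  induction c using Fin.lastCases with
  | last => simp [columnFamily, Fin.castSucc_ne_last]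
  | cast y =>
    simp [columnFamily, Fin.card_filter_insertNth_eq, ← Equiv.eq_symm_apply, filter_eq',
      (Fin.castSucc_ne_last y).symm, sum_add_distrib, add_comm]

theorem sum_le_sum_sup'_add [AddCommMonoid M] [LinearOrder M] [IsOrderedAddMonoid M]
    (A : Matrix (Fin (n + 1)) (Fin n) M) (J : Fin (n + 1) → M) {p : Fin (n + 1)}
    (σ : Perm (Fin n)) (hσ : J p ≤ ∑ k, A (p.succAbove k) (σ k)) :
    ∑ i, J i ≤ ∑ j, univ.sup' univ_nonempty (fun i => A i j + J i) :=
  calc ∑ i, J i = J p + ∑ k, J (p.succAbove k) := Fin.sum_univ_succAbove J p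
    _ ≤ ∑ k, A (p.succAbove k) (σ k) + ∑ k, J (p.succAbove k) := add_le_add_left hσ _
    _ = ∑ k, (A (p.succAbove k) (σ k) + J (p.succAbove k)) := sum_add_distrib.symm
    _ ≤ ∑ k, univ.sup' univ_nonempty (fun i => A i (σ k) + J i) :=
      sum_le_sum fun k _ => le_sup' (fun i => A i (σ k) + J i) (mem_univ _)
    _ = ∑ j, univ.sup' univ_nonempty (fun i => A i j + J i) :=
      Equiv.sum_comp σ fun j => univ.sup' univ_nonempty (fun i => A i j + J i)

theorem sum_sup'_add_le (A : Matrix (Fin (n + 1)) (Fin n) (WithBot ℤ)) (J : Fin (n + 1) → ℤ)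
    (σ : Fin (n + 1) → Perm (Fin n)) (hσ : ∀ i, (J i : WithBot ℤ) ≤ ∑ k, A (i.succAbove k) (σ i k))
    (hJ : ∀ i (τ : Perm (Fin n)), ∑ k, A (i.succAbove k) (τ k) ≤ J i) :
    ∑ j, univ.sup' univ_nonempty (fun i => A i j + J i) ≤ ∑ i, (J i : WithBot ℤ) := by
  choose f _ hf using fun j => exists_mem_eq_sup' univ_nonempty fun i => A i j + (J i : WithBot ℤ)
  have hπ (π : Perm (Fin (n + 1))) : ∑ r, Fin.snoc (α := fun _ => WithBot ℤ) (A r) 0 (π r) ≤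
      ∑ r, ((Pi.single (Fin.last n) (J r) : Fin (n + 1) → ℤ) (π r) : WithBot ℤ) := by
    refine (sum_snoc_zero_le A _ hJ π).trans_eq ?_
    rw [← WithBot.coe_sum]
    simp [Pi.single_apply, ← Equiv.eq_symm_apply]
  calc ∑ j, univ.sup' univ_nonempty (fun i => A i j + J i) = ∑ j, (A (f j) j + J (f j)) :=
        sum_congr rfl fun j _ => hf j
    _ ≤ ∑ t, ∑ r, Fin.snoc (α := fun _ => WithBot ℤ) (A r) 0 (columnFamily f σ t r) := by
        simp only [Fin.sum_univ_castSucc (f := fun t => ∑ r, _), columnFamily, Fin.snoc_castSucc,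
          Fin.snoc_last, sum_const_zero, add_zero]
        refine sum_le_sum fun j _ => ?_
        rw [Fin.sum_apply_insertNth A]
        exact add_le_add_right (hσ _) _
    _ ≤ ∑ t, ∑ r, ((Pi.single (Fin.last n) (J r) : Fin (n + 1) → ℤ) (columnFamily f σ t r) :
          WithBot ℤ) :=
        WithBot.sum_sum_le_of_forall_perm _ (sum_card_columnFamily f σ) hπ
    _ = ∑ i, (J i : WithBot ℤ) := by
        simp [Fin.sum_univ_castSucc (f := fun t => ∑ r, _), columnFamily, Pi.single_apply]

/-- For an `(n+1) × n` matrix `A` with entries in `ℤ ∪ {-∞}` (modelled as `WithBot ℤ`),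
let `J i` be the Jacobi number (maximal diagonal sum over permutations) of the `n × n`
matrix obtained by deleting row `i`.  If `J i ≥ 0` for all `i`, then
`J 0 + ⋯ + Jن n = ∑_{j} max_i (A i j + J i)`. -/
theorem stmt1 (n : ℕ) (A : Matrix (Fin (n + 1)) (Fin n) (WithBot ℤ))
    (J : Fin (n + 1) → WithBot ℤ)
    (hJ : ∀ i, J i = Finset.univ.sup' Finset.univ_nonempty
      (fun σ : Equiv.Perm (Fin n) => ∑ k, A (i.succAbove k) (σ k)))
    (hpos : ∀ i, (0 : WithBot ℤ) ≤ J i) :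
    ∑ i, J i =
      ∑ j, Finset.univ.sup' Finset.univ_nonempty
        (fun i : Fin (n + 1) => A i j + J i) := by
  lift J to Fin (n + 1) → ℤ using fun i => ne_bot_of_le_ne_bot WithBot.coe_ne_bot (hpos i)
  have hmax (i : Fin (n + 1)) (τ : Perm (Fin n)) : ∑ k, A (i.succAbove k) (τ k) ≤ J i :=
    (le_sup' (fun σ : Perm (Fin n) => ∑ k, A (i.succAbove k) (σ k)) (mem_univ τ)).trans_eq
      (hJ i).symm
  choose σ _ hσ using fun i : Fin (n + 1) =>
    exists_mem_eq_sup' univ_nonempty fun σ : Perm (Fin n) => ∑ k, A (i.succAbove k) (σ k)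
  have hJσ (i : Fin (n + 1)) : (J i : WithBot ℤ) ≤ ∑ k, A (i.succAbove k) (σ i k) :=
    ((hJ i).trans (hσ i)).le
  exact le_antisymm (sum_le_sum_sup'_add A _ (σ 0) (hJσ 0)) (sum_sup'_add_le A J σ hJσ hmax)
end

section
/- Let M be an m×n T-shape matrix with index (i,j): there exist 1 ≤ i ≤ min(m,n), 0 ≤ j ≤ min(m,n)−i such that all entries except those in the first i rows and in columns i+1,…,i+j are zero, and the submatrix consisting of the first i+j columns of M is reduced. Then rank(M) = i + j. In particular, a T-shape matrix is of full rank min(m,n) if and only if i + j = min(m,n). -/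
/-- An `m × n` matrix `(d s t)` whose `(s,t)` entry is a univariate polynomial in
the variable `x_t` is *reduced* if for each diagonal position `s = t` (with
`s < min m n`), `d s s ≠ 0` and `deg(d s s) > deg(d k s)` for all `k > s`
(with `deg 0 = -∞`). -/
def IsReducedMat {K : Type*} [Field K] {m n : ℕ}
    (d : Fin m → Fin n → Polynomial K) : Prop :=
  ∀ (s : Fin m) (t : Fin n), (s : ℕ) = (t : ℕ) →
    d s t ≠ 0 ∧ ∀ k : Fin m, (s : ℕ) < (k : ℕ) → (d k t).degree < (d s t).degree

/-!
From row `i` on, the matrix is supported on the `j` columns `i, …, i + j - 1`, so splitting off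
the first `i` rows bounds the rank by `i + j`. Conversely the leading `(i + j)`-minor is nonzero:
since column `u` only involves `x_u`, the coefficient of `∏ x_u ^ deg d_uu` in that determinant
is the determinant of the scalar matrix `(coeff_{deg d_uu} d_tu)`, which reducedness makes upper
triangular with the leading coefficients of the `d_uu` on its diagonal.
-/

namespace MvPolynomial

theorem aeval_X_eq_sum_monomial {R σ : Type*} [CommSemiring R] (u : σ) (g : Polynomial R) :
    Polynomial.aeval (X u : MvPolynomial σ R) g =
      ∑ k ∈ g.support, monomial (Finsupp.single u k) (g.coeff k) := by
  conv_lhs => rw [g.as_sum_support]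
  simp [X_pow_eq_monomial, C_mul_monomial]

theorem coeff_prod_aeval_X {R σ : Type*} [CommSemiring R] [Fintype σ] [DecidableEq σ]
    (g : σ → Polynomial R) (μ : σ →₀ ℕ) :
    coeff μ (∏ u, Polynomial.aeval (X u : MvPolynomial σ R) (g u)) =
      ∏ u, (g u).coeff (μ u) := by
  have hμ : ∀ x : σ → ℕ, ∑ u, Finsupp.single u (x u) = μ ↔ x = μ := fun x => by
    constructor
    · rintro rfl; ext u; simp [Finsupp.single_apply]
    · rintro rfl; exact Finsupp.univ_sum_single μ
  simp_rw [aeval_X_eq_sum_monomial, Finset.prod_univ_sum, ← monomial_sum_prod, coeff_sum,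
    coeff_monomial, hμ]
  rw [Finset.sum_ite_eq', ite_eq_left_iff]
  intro hμg
  obtain ⟨u, hu⟩ : ∃ u, (g u).coeff (μ u) = 0 := by simpa [Fintype.mem_piFinset] using hμg
  exact (Finset.prod_eq_zero (Finset.mem_univ u) hu).symm

theorem coeff_det_aeval_X {R σ : Type*} [CommRing R] [Fintype σ] [DecidableEq σ]
    (p : σ → σ → Polynomial R) (μ : σ →₀ ℕ) :
    coeff μ (Matrix.of fun t u => Polynomial.aeval (X u : MvPolynomial σ R) (p t u)).det =
      (Matrix.of fun t u => (p t u).coeff (μ u)).det := by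
  simp only [Matrix.det_apply, coeff_sum, coeff_smul, Matrix.of_apply, coeff_prod_aeval_X]

theorem det_aeval_X_ne_zero {R ι : Type*} [CommRing R] [IsDomain R] [Fintype ι] [LinearOrder ι]
    (p : ι → ι → Polynomial R) (hdiag : ∀ u, p u u ≠ 0)
    (hlow : ∀ t u, u < t → (p t u).degree < (p u u).degree) :
    (Matrix.of fun t u => Polynomial.aeval (X u : MvPolynomial ι R) (p t u)).det ≠ 0 := by
  set μ : ι →₀ ℕ := Finsupp.equivFunOnFinite.symm fun u => (p u u).natDegree
  have hupper : (Matrix.of fun t u => (p t u).coeff (μ u)).IsUpperTriangular := fun t u hut =>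
    Polynomial.coeff_eq_zero_of_degree_lt <|
      (hlow t u hut).trans_eq (Polynomial.degree_eq_natDegree (hdiag u))
  intro hdet
  have hcoeff := congrArg (coeff μ) hdet
  rw [coeff_det_aeval_X, Matrix.det_of_isUpperTriangular hupper, coeff_zero] at hcoeff
  exact Finset.prod_ne_zero_iff.mpr (fun u _ => Polynomial.leadingCoeff_ne_zero.mpr (hdiag u))
    hcoeff

theorem det_aeval_X_ne_zero_of_injective {R ι τ : Type*} [CommRing R] [IsDomain R] [Fintype ι]
    [LinearOrder ι] (p : ι → ι → Polynomial R) (hdiag : ∀ u, p u u ≠ 0)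
    (hlow : ∀ t u, u < t → (p t u).degree < (p u u).degree) {f : ι → τ}
    (hf : Function.Injective f) :
    (Matrix.of fun t u => Polynomial.aeval (X (f u) : MvPolynomial τ R) (p t u)).det ≠ 0 := by
  have hrename : (Matrix.of fun t u => Polynomial.aeval (X (f u) : MvPolynomial τ R) (p t u)) =
      (rename f).mapMatrix (Matrix.of fun t u => Polynomial.aeval (X u) (p t u)) := by
    ext t u
    simp
  rw [hrename, ← AlgHom.map_det, map_ne_zero_iff _ (rename_injective f hf)]
  exact det_aeval_X_ne_zero p hdiag hlow

end MvPolynomial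

namespace Matrix

variable {m n : Type*} [Fintype n]

theorem rank_add_le {F : Type*} [Field F] (A B : Matrix m n F) :
    (A + B).rank ≤ A.rank + B.rank := by
  rw [rank, rank, rank, mulVecLin_add]
  exact (Submodule.finrank_mono (LinearMap.range_add_le _ _)).trans
    (Submodule.finrank_add_le_finrank_add_finrank _ _)

theorem rank_le_card_add_card_of_eq_zero [Fintype m] {F : Type*} [Field F] (A : Matrix m n F)
    (s : Finset m) (t : Finset n) (h : ∀ x y, x ∉ s → y ∉ t → A x y = 0) :
    A.rank ≤ s.card + t.card := by
  classical
  set A₁ : Matrix m n F := of fun x y => if x ∈ s then A x y else 0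
  have hA₁ : A₁.rank ≤ s.card := by
    refine rank_le_card_of_support_subset A₁ s fun x hx => ?_
    by_contra hxs
    exact hx (funext fun y => if_neg hxs)
  have hA₂ : (A - A₁).rank ≤ t.card := by
    rw [← rank_transpose]
    refine rank_le_card_of_support_subset _ t fun y hy => ?_
    by_contra hyt
    refine hy (funext fun x => ?_)
    by_cases hxs : x ∈ s
    · simp [A₁, hxs]
    · simp [A₁, hxs, h x y hxs hyt]
  calc A.rank = (A₁ + (A - A₁)).rank := by rw [add_sub_cancel]
    _ ≤ s.card + t.card := (rank_add_le _ _).trans (add_le_add hA₁ hA₂)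

theorem card_le_rank_of_det_submatrix_ne_zero {R ι : Type*} [CommRing R] [IsDomain R]
    [Fintype ι] [DecidableEq ι] (A : Matrix m n R) (r : ι → m) (c : ι → n)
    (h : (A.submatrix r c).det ≠ 0) : Fintype.card ι ≤ A.rank :=
  (rank_of_det_ne_zero h).symm.trans_le (rank_submatrix_le A r c)

end Matrix

theorem IsReducedMat.det_aeval_X_ne_zero {K τ : Type*} [Field K] {m N : ℕ}
    {d : Fin m → Fin N → Polynomial K} (hd : IsReducedMat d) (hN : N ≤ m) {f : Fin N → τ}
    (hf : Function.Injective f) :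
    (Matrix.of fun t u => Polynomial.aeval (MvPolynomial.X (f u) : MvPolynomial τ K)
      (d (Fin.castLE hN t) u)).det ≠ 0 :=
  MvPolynomial.det_aeval_X_ne_zero_of_injective _ (fun u => (hd _ u rfl).1)
    (fun t u hut => (hd _ u rfl).2 _ hut) hf

open Finset in
theorem Fin.card_filter_val_mem_le {n : ℕ} (s : Finset ℕ) : #{y : Fin n | ↑y ∈ s} ≤ #s :=
  card_le_card_of_injOn Fin.val (fun y hy => by simpa using hy) Fin.val_injective.injOn

open Finset in
theorem Matrix.rank_le_add_of_tShape {F : Type*} [Field F] {m n : ℕ}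
    (A : Matrix (Fin m) (Fin n) F) (i j : ℕ)
    (h : ∀ (x : Fin m) (y : Fin n), i ≤ (x : ℕ) → ((y : ℕ) < i ∨ i + j ≤ (y : ℕ)) →
      A x y = 0) :
    A.rank ≤ i + j :=
  calc A.rank ≤ #{x : Fin m | ↑x ∈ range i} + #{y : Fin n | ↑y ∈ Ico i (i + j)} := by
        refine A.rank_le_card_add_card_of_eq_zero _ _ fun x y hx hy => h x y ?_ ?_ <;>
          simp only [mem_filter, mem_univ, true_and, mem_range, mem_Ico] at hx hy <;> omega
    _ ≤ #(range i) + #(Ico i (i + j)) :=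
        add_le_add (Fin.card_filter_val_mem_le _) (Fin.card_filter_val_mem_le _)
    _ = i + j := by simp

theorem stmt7_general (K : Type*) [Field K] (m n i j : ℕ)
    (hij : i + j ≤ min m n)
    (d : Fin m → Fin n → Polynomial K)
    (hzero : ∀ (s : Fin m) (t : Fin n), i ≤ (s : ℕ) →
      ((t : ℕ) < i ∨ i + j ≤ (t : ℕ)) → d s t = 0)
    (hred : IsReducedMat (fun (s : Fin m) (t : Fin (i + j)) =>
      d s (Fin.castLE (le_trans hij (min_le_right m n)) t))) :
    (Matrix.of fun (s : Fin m) (t : Fin n) =>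
        algebraMap (MvPolynomial (Fin n) K) (FractionRing (MvPolynomial (Fin n) K))
          (Polynomial.aeval (MvPolynomial.X t) (d s t))).rank = i + j ∧
    ((Matrix.of fun (s : Fin m) (t : Fin n) =>
        algebraMap (MvPolynomial (Fin n) K) (FractionRing (MvPolynomial (Fin n) K))
          (Polynomial.aeval (MvPolynomial.X t) (d s t))).rank = min m n ↔
      i + j = min m n) := by
  have hNm : i + j ≤ m := hij.trans (min_le_left m n)
  have hNn : i + j ≤ n := hij.trans (min_le_right m n)
  set φ := algebraMap (MvPolynomial (Fin n) K) (FractionRing (MvPolynomial (Fin n) K))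
  set M := Matrix.of fun s t => φ (Polynomial.aeval (MvPolynomial.X t) (d s t))
  have hdet : (M.submatrix (Fin.castLE hNm) (Fin.castLE hNn)).det ≠ 0 := by
    have hmap : M.submatrix (Fin.castLE hNm) (Fin.castLE hNn) =
        φ.mapMatrix (Matrix.of fun t u => Polynomial.aeval (MvPolynomial.X (Fin.castLE hNn u))
          (d (Fin.castLE hNm t) (Fin.castLE hNn u))) := rfl
    rw [hmap, ← RingHom.map_det, map_ne_zero_iff _ (IsFractionRing.injective _ _)]
    exact hred.det_aeval_X_ne_zero hNm (Fin.castLE_injective hNn)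
  have hrank : M.rank = i + j := by
    refine le_antisymm (M.rank_le_add_of_tShape i j fun x y hx hy => ?_) ?_
    · simp [M, hzero x y hx hy]
    · simpa using M.card_le_rank_of_det_submatrix_ne_zero _ _ hdet
  exact ⟨hrank, by rw [hrank]⟩

/-- **Rank of a T-shape matrix.**  Let `M` be an `m × n` matrix in T-shape with index
`(i,j)`: `1 ≤ i`, `i + j ≤ min m n`, all entries outside the first `i` rows and
outside columns `i+1,…,i+j` vanish, and the submatrix of the first `i+j` columns is
reduced.  Then `rank M = i + j` (over the field of rational functions); in
particular `M` has full rank `min m n` iff `i + j = min m n`. -/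
theorem stmt7 (K : Type*) [Field K] (m n i j : ℕ) (hi : 1 ≤ i)
    (hij : i + j ≤ min m n)
    (d : Fin m → Fin n → Polynomial K)
    (hzero : ∀ (s : Fin m) (t : Fin n), i ≤ (s : ℕ) →
      ((t : ℕ) < i ∨ i + j ≤ (t : ℕ)) → d s t = 0)
    (hred : IsReducedMat (fun (s : Fin m) (t : Fin (i + j)) =>
      d s (Fin.castLE (le_trans hij (min_le_right m n)) t))) :
    (Matrix.of fun (s : Fin m) (t : Fin n) =>
        algebraMap (MvPolynomial (Fin n) K) (FractionRing (MvPolynomial (Fin n) K))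
          (Polynomial.aeval (MvPolynomial.X t) (d s t))).rank = i + j ∧
    ((Matrix.of fun (s : Fin m) (t : Fin n) =>
        algebraMap (MvPolynomial (Fin n) K) (FractionRing (MvPolynomial (Fin n) K))
          (Polynomial.aeval (MvPolynomial.X t) (d s t))).rank = min m n ↔
      i + j = min m n) :=
  stmt7_general K m n i j hij d hzero hred
end

section
/- Let f ∈ K{y₀,…,yₙ} be a differential polynomial over an ordinary differential field K of characteristic zero (a polynomial in indeterminates y_j^{(k)}, j = 0,…,n, k ∈ ℕ, with derivation δ(y_j^{(k)}) = y_j^{(k+1)}). Then f is differentially homogeneous of degree m (meaning f(λy₀,…,λyₙ) = λ^m f(y₀,…,yₙ) as an identity in K{λ, y₀,…,yₙ} for a differential indeterminate λ, where λy_j is differentiated by the Leibniz rule) if and only if for every r ∈ ℕ: Σ_{j=0}^{n} Σ_{k ∈ ℕ} binom(k+r, r) · y_j^{(k)} · ∂f/∂(y_j^{(k+r)}) equals m·f when r = 0, and equals 0 when r ≠ 0. -/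
/-!
Write `Φ f = f(λy)`. The operators `E_r = ∑_{j,k} C(k+r,r) y_j^{(k)} ∂/∂y_j^{(k+r)}` are
derivations, and `Φ` intertwines `E_r` with the operator `L_r = ∑_i C(i+r,r) λ^{(i)} ∂/∂λ^{(i+r)}`
in the `λ`-variables; on generators this is `C(k,i) C(i,r) = C(k,r) C(k-r,i-r)`. Specializing
`λ` to the constant `1` recovers `f` from `Φ f`.

If `Φ f = λ^m f`, then `L_r (Φ f) = [r = 0] m Φ f`, and specializing `λ = 1` gives the
identities for `E_r f`. Conversely, these identities give `L_r P = [r = 0] m P` for `P = Φ f`.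
Descending induction on `r` shows `∂P/∂λ^{(r)} = 0` for `r > 0`, after which `L_0` is the Euler
operator `λ ∂/∂λ`, so every monomial of `P` contains `λ` exactly `m` times and no derivative of
`λ`. Hence `P = λ^m · P|_{λ=1} = λ^m f`.
-/

open MvPolynomial

lemma Nat.choose_add_mul_choose_add (s r t : ℕ) :
    (s + r).choose (r + t) * (r + t).choose r = (s + r).choose r * s.choose t := by
  simpa using Nat.choose_mul (n := s + r) (Nat.le_add_right r t)

namespace MvPolynomial

variable {ι R : Type*} [CommSemiring R]

lemma hasFiniteSupport_choose_mul_X_mul_pderiv (i : ι) (r : ℕ) (f : MvPolynomial (ι × ℕ) R) :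
    Function.HasFiniteSupport fun k : ℕ =>
      ((k + r).choose r : MvPolynomial (ι × ℕ) R) * (X (i, k) * pderiv (i, k + r) f) := by
  refine (f.vars.finite_toSet.preimage (f := fun k => (i, k + r)) ?_).subset fun k hk => ?_
  · intro a _ b _ h
    simpa using h
  · by_contra hv
    exact hk (by simp only [pderiv_eq_zero_of_notMem_vars hv, mul_zero])

noncomputable def eulerOp (i : ι) (r : ℕ) :
    Derivation R (MvPolynomial (ι × ℕ) R) (MvPolynomial (ι × ℕ) R) where
  toFun f :=
    ∑ᶠ k : ℕ, ((k + r).choose r : MvPolynomial (ι × ℕ) R) * (X (i, k) * pderiv (i, k + r) f)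
  map_add' f g := by
    rw [← finsum_add_distrib (hasFiniteSupport_choose_mul_X_mul_pderiv i r f)
      (hasFiniteSupport_choose_mul_X_mul_pderiv i r g)]
    simp only [map_add, mul_add]
  map_smul' c f := by
    rw [RingHom.id_apply, smul_eq_C_mul, smul_eq_C_mul,
      mul_finsum' _ _ (hasFiniteSupport_choose_mul_X_mul_pderiv i r f)]
    simp only [pderiv_C_mul, mul_left_comm]
  map_one_eq_zero' := by simp
  leibniz' f g := by
    have hf := hasFiniteSupport_choose_mul_X_mul_pderiv i r f
    have hg := hasFiniteSupport_choose_mul_X_mul_pderiv i r g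
    dsimp only [LinearMap.coe_mk, AddHom.coe_mk]
    rw [smul_eq_mul, smul_eq_mul, mul_finsum' _ _ hg, mul_finsum' _ _ hf,
      ← finsum_add_distrib (f := fun k => f * _) (g := fun k => g * _)
        (hg.mul_right _) (hf.mul_right _)]
    refine finsum_congr fun k => ?_
    rw [pderiv_mul]
    ring

lemma eulerOp_apply (i : ι) (r : ℕ) (f : MvPolynomial (ι × ℕ) R) :
    eulerOp i r f =
      ∑ᶠ k : ℕ, ((k + r).choose r : MvPolynomial (ι × ℕ) R) * (X (i, k) * pderiv (i, k + r) f) :=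
  rfl

lemma sum_eulerOp_apply [Fintype ι] (r : ℕ) (f : MvPolynomial (ι × ℕ) R) :
    (∑ j, eulerOp j r) f = ∑ j, eulerOp j r f := by
  rw [← Derivation.coeFnAddMonoidHom_apply, map_sum, Finset.sum_apply]; rfl

lemma eulerOp_eq_zero {i : ι} {r : ℕ} {f : MvPolynomial (ι × ℕ) R}
    (h : ∀ k, (i, k + r) ∉ f.vars) : eulerOp i r f = 0 := by
  simp [eulerOp_apply, pderiv_eq_zero_of_notMem_vars (h _)]

lemma eulerOp_X_eq_zero {i : ι} {r : ℕ} {v : ι × ℕ} (h : ∀ k, v ≠ (i, k + r)) :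
    eulerOp i r (X v : MvPolynomial (ι × ℕ) R) = 0 := by
  simp only [eulerOp_apply, fun k => pderiv_X_of_ne (R := R) (h k), mul_zero, finsum_zero]

lemma eulerOp_X_add (i : ι) (k r : ℕ) :
    eulerOp i r (X (i, k + r) : MvPolynomial (ι × ℕ) R) =
      ((k + r).choose r : MvPolynomial (ι × ℕ) R) * X (i, k) := by
  rw [eulerOp_apply, finsum_eq_single _ k fun k' hk' => ?_, pderiv_X_self, mul_one]
  rw [pderiv_X_of_ne (by simpa using Ne.symm hk'), mul_zero, mul_zero]

lemma eulerOp_eq_X_mul_pderiv {i : ι} {r : ℕ} {f : MvPolynomial (ι × ℕ) R}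
    (h : ∀ s, r < s → pderiv (i, s) f = 0) : eulerOp i r f = X (i, 0) * pderiv (i, r) f := by
  rw [eulerOp_apply, finsum_eq_single _ 0 fun k hk => ?_]
  · simp
  · rw [h (k + r) (by omega), mul_zero, mul_zero]

variable (ι R) in
/-- `f(λy)`: the variable `(none, i)` is `λ^{(i)}`, `(some j, k)` is `y_j^{(k)}`, and `y_j^{(k)}` is
sent to `δ^k(λ y_j)`, expanded by the Leibniz rule. -/
noncomputable def scaleByLambda : MvPolynomial (ι × ℕ) R →ₐ[R] MvPolynomial (Option ι × ℕ) R :=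
  aeval fun v => ∑ i ∈ Finset.range (v.2 + 1),
    (v.2.choose i : MvPolynomial (Option ι × ℕ) R) * X (none, i) * X (some v.1, v.2 - i)

variable (ι R) in
/-- Specialization of `λ` to the constant `1`, so that `λ^{(i)} ↦ 0` for `i > 0`. -/
noncomputable def evalLambdaOne : MvPolynomial (Option ι × ℕ) R →ₐ[R] MvPolynomial (ι × ℕ) R :=
  aeval fun w => w.1.elim (if w.2 = 0 then 1 else 0) fun j => X (j, w.2)

lemma evalLambdaOne_scaleByLambda (f : MvPolynomial (ι × ℕ) R) :
    evalLambdaOne ι R (scaleByLambda ι R f) = f := by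
  suffices (evalLambdaOne ι R).comp (scaleByLambda ι R) = AlgHom.id R _ from
    AlgHom.congr_fun this f
  refine algHom_ext fun v => ?_
  simp only [AlgHom.comp_apply, scaleByLambda, evalLambdaOne, aeval_X, map_sum, map_mul,
    map_natCast, Option.elim, AlgHom.id_apply]
  rw [Finset.sum_eq_single 0 (fun i _ hi => by simp [hi]) (by simp)]
  simp

lemma evalLambdaOne_X_pow_mul_rename (m : ℕ) (g : MvPolynomial (ι × ℕ) R) :
    evalLambdaOne ι R (X (none, 0) ^ m * rename (Prod.map some id) g) = g := by
  suffices (evalLambdaOne ι R).comp (rename (Prod.map some id)) = AlgHom.id R _ by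
    rw [map_mul, ← AlgHom.comp_apply, this]
    simp [evalLambdaOne]
  exact algHom_ext fun v => by simp [evalLambdaOne]

lemma eulerOp_none_rename (r : ℕ) (g : MvPolynomial (ι × ℕ) R) :
    eulerOp none r (rename (Prod.map some id) g) = 0 := by
  classical
  refine eulerOp_eq_zero fun k hk => ?_
  obtain ⟨v, -, hv⟩ := Finset.mem_image.mp (vars_rename _ g hk)
  simp [Prod.ext_iff] at hv

lemma eulerOp_none_X_pow (r m : ℕ) :
    eulerOp none r (X (none, 0) ^ m : MvPolynomial (Option ι × ℕ) R) =
      if r = 0 then (m : MvPolynomial (Option ι × ℕ) R) * X (none, 0) ^ m else 0 := by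
  rw [Derivation.leibniz_pow]
  split_ifs with hr
  · subst hr
    rw [show ((none : Option ι), 0) = (none, 0 + 0) from rfl, eulerOp_X_add]
    cases m <;> simp [pow_succ]
  · rw [eulerOp_X_eq_zero (by simp; omega), smul_zero, smul_zero]

lemma eulerOp_none_X_pow_mul_rename (r m : ℕ) (g : MvPolynomial (ι × ℕ) R) :
    eulerOp none r (X (none, 0) ^ m * rename (Prod.map some id) g) =
      if r = 0 then
        (m : MvPolynomial (Option ι × ℕ) R) * (X (none, 0) ^ m * rename (Prod.map some id) g)
      else 0 := by
  rw [Derivation.leibniz, eulerOp_none_rename, eulerOp_none_X_pow, smul_zero, zero_add, smul_eq_mul]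
  split_ifs <;> ring

lemma eulerOp_none_X_none (r i : ℕ) :
    eulerOp none r (X (none, i) : MvPolynomial (Option ι × ℕ) R) =
      if r ≤ i then (i.choose r : MvPolynomial (Option ι × ℕ) R) * X (none, i - r) else 0 := by
  split_ifs with h
  · obtain ⟨s, rfl⟩ := Nat.exists_eq_add_of_le' h
    rw [eulerOp_X_add, Nat.add_sub_cancel]
  · exact eulerOp_X_eq_zero (by simp; omega)

lemma scaleByLambda_X (v : ι × ℕ) :
    scaleByLambda ι R (X v) = ∑ i ∈ Finset.range (v.2 + 1),
      (v.2.choose i : MvPolynomial (Option ι × ℕ) R) * X (none, i) * X (some v.1, v.2 - i) :=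
  aeval_X _ v

lemma eulerOp_none_scaleByLambda_X (r : ℕ) (v : ι × ℕ) :
    eulerOp none r (scaleByLambda ι R (X v)) = ∑ i ∈ Finset.range (v.2 + 1),
      (v.2.choose i : MvPolynomial (Option ι × ℕ) R) * eulerOp none r (X (none, i)) *
        X (some v.1, v.2 - i) := by
  rw [scaleByLambda_X, map_sum]
  refine Finset.sum_congr rfl fun i _ => ?_
  rw [Derivation.leibniz, Derivation.leibniz, Derivation.map_natCast,
    eulerOp_X_eq_zero (by simp), smul_zero, smul_zero, add_zero, zero_add, smul_eq_mul, smul_eq_mul]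
  ring

lemma scaleByLambda_sum_eulerOp_X [Fintype ι] (r : ℕ) (v : ι × ℕ) :
    scaleByLambda ι R ((∑ j, eulerOp j r) (X v)) = eulerOp none r (scaleByLambda ι R (X v)) := by
  obtain ⟨j, k⟩ := v
  rw [eulerOp_none_scaleByLambda_X, sum_eulerOp_apply]
  simp only [eulerOp_none_X_none]
  rcases lt_or_ge k r with hk | hk
  · rw [Finset.sum_eq_zero fun j' _ => eulerOp_X_eq_zero (by simp; omega), map_zero]
    refine (Finset.sum_eq_zero fun i hi => ?_).symm
    rw [if_neg (by simp at hi; omega), mul_zero, zero_mul]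
  obtain ⟨s, rfl⟩ := Nat.exists_eq_add_of_le' hk
  rw [Finset.sum_eq_single j (fun j' _ hj' => eulerOp_X_eq_zero (by simp [hj'.symm])) (by simp),
    eulerOp_X_add, map_mul, map_natCast, scaleByLambda_X]
  dsimp only
  rw [show s + r + 1 = r + (s + 1) by ring, Finset.sum_range_add _ r,
    Finset.sum_eq_zero (s := Finset.range r) fun i hi => by
      rw [if_neg (by simp at hi; omega), mul_zero, zero_mul],
    zero_add, Finset.mul_sum]
  refine Finset.sum_congr rfl fun t _ => ?_
  rw [if_pos (Nat.le_add_right r t), Nat.add_sub_cancel_left,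
    show s + r - (r + t) = s - t by omega]
  trans (((s + r).choose r * s.choose t : ℕ) : MvPolynomial (Option ι × ℕ) R) *
    (X (none, t) * X (some j, s - t))
  · push_cast; ring
  · rw [← Nat.choose_add_mul_choose_add]; push_cast; ring

lemma scaleByLambda_sum_eulerOp [Fintype ι] (r : ℕ) (f : MvPolynomial (ι × ℕ) R) :
    scaleByLambda ι R ((∑ j, eulerOp j r) f) = eulerOp none r (scaleByLambda ι R f) := by
  induction f using MvPolynomial.induction_on with
  | C c => simp [← algebraMap_eq]
  | add p q hp hq => rw [map_add, map_add, hp, hq, map_add, map_add]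
  | mul_X p v hp =>
    rw [Derivation.leibniz, smul_eq_mul, smul_eq_mul, map_add, map_mul, map_mul, hp,
      scaleByLambda_sum_eulerOp_X, map_mul, Derivation.leibniz, smul_eq_mul, smul_eq_mul]

lemma pderiv_eq_zero_of_eulerOp_eq_zero {i : ι} {f : MvPolynomial (ι × ℕ) R}
    (h : ∀ r, 0 < r → eulerOp i r f = 0) {r : ℕ} (hr : 0 < r) : pderiv (i, r) f = 0 := by
  set N := f.vars.sup Prod.snd + 1
  have hN : ∀ s, N ≤ s → pderiv (i, s) f = 0 := fun s hs =>
    pderiv_eq_zero_of_notMem_vars fun hv => by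
      have := Finset.le_sup (f := Prod.snd) hv
      omega
  refine Nat.decreasingInduction (motive := fun k _ => ∀ s, k ≤ s → 0 < s → pderiv (i, s) f = 0)
    (fun k _ ih s hks hs => ?_) (fun s hs _ => hN s hs) (Nat.zero_le N) r (Nat.zero_le r) hr
  rcases hks.eq_or_lt with rfl | hks
  · have hX := eulerOp_eq_X_mul_pderiv fun s' hs' => ih s' hs' (by omega)
    rw [h k hs] at hX
    exact isRegular_X.left (hX.symm.trans (mul_zero _).symm)
  · exact ih s hks hs

lemma coeff_X_mul_pderiv {σ : Type*} (v : σ) (P : MvPolynomial σ R) (u : σ →₀ ℕ) :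
    coeff u (X v * pderiv v P) = u v * coeff u P := by
  classical
  induction P using MvPolynomial.induction_on' with
  | monomial d c =>
    rw [X_mul_pderiv_monomial, coeff_smul, coeff_monomial]
    split_ifs with hd
    · rw [hd, nsmul_eq_mul]
    · simp
  | add p q hp hq => rw [map_add, mul_add, coeff_add, coeff_add, hp, hq, mul_add]

lemma apply_eq_of_mem_support_of_eulerOp [IsDomain R] [CharZero R] {i : ι} {m : ℕ}
    {f : MvPolynomial (ι × ℕ) R}
    (h : ∀ r, eulerOp i r f = if r = 0 then (m : MvPolynomial (ι × ℕ) R) * f else 0)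
    {u : (ι × ℕ) →₀ ℕ} (hu : u ∈ f.support) (r : ℕ) :
    u (i, r) = if r = 0 then m else 0 := by
  have hpos : ∀ s, 0 < s → pderiv (i, s) f = 0 :=
    fun s hs => pderiv_eq_zero_of_eulerOp_eq_zero (fun r hr => by rw [h r, if_neg hr.ne']) hs
  have hcoeff : coeff u f ≠ 0 := mem_support_iff.mp hu
  split_ifs with hr
  · subst hr
    have h0 := congrArg (coeff u) ((eulerOp_eq_X_mul_pderiv fun s hs => hpos s hs).symm.trans (h 0))
    rw [coeff_X_mul_pderiv, if_pos rfl, ← C_eq_coe_nat, coeff_C_mul] at h0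
    exact_mod_cast mul_right_cancel₀ hcoeff h0
  · have hr0 := congrArg (coeff u) (congrArg (X (i, r) * ·) (hpos r (Nat.pos_of_ne_zero hr)))
    simp only [coeff_X_mul_pderiv, mul_zero, coeff_zero] at hr0
    exact_mod_cast (mul_eq_zero.mp hr0).resolve_right hcoeff

lemma exists_monomial_eq_X_pow_mul_rename {m : ℕ} {u : (Option ι × ℕ) →₀ ℕ}
    (hu : ∀ r, u (none, r) = if r = 0 then m else 0) (c : R) :
    ∃ g : MvPolynomial (ι × ℕ) R, monomial u c = X (none, 0) ^ m * rename (Prod.map some id) g := by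
  have hinj : Function.Injective (Prod.map some id : ι × ℕ → Option ι × ℕ) :=
    (Option.some_injective ι).prodMap Function.injective_id
  have hrange : ↑(u.erase (none, 0)).support ⊆ Set.range (Prod.map some id : ι × ℕ → _) := by
    rintro ⟨_ | j, k⟩ hw
    · rcases Nat.eq_zero_or_pos k with rfl | hk
      · simp at hw
      · simp [Finsupp.erase_ne (show ((none : Option ι), k) ≠ (none, 0) by simp; omega), hu,
          hk.ne'] at hw
    · exact ⟨(j, k), rfl⟩
  have hu0 : u (none, 0) = m := by simpa using hu 0
  refine ⟨monomial (u.erase (none, 0) |>.comapDomain _ hinj.injOn) c, ?_⟩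
  rw [rename_monomial, Finsupp.mapDomain_comapDomain _ hinj _ hrange, X_pow_eq_monomial,
    monomial_mul, one_mul, ← hu0, Finsupp.single_add_erase]

lemma eq_X_pow_mul_rename_evalLambdaOne {m : ℕ} {P : MvPolynomial (Option ι × ℕ) R}
    (h : ∀ u ∈ P.support, ∀ r, u (none, r) = if r = 0 then m else 0) :
    P = X (none, 0) ^ m * rename (Prod.map some id) (evalLambdaOne ι R P) := by
  conv_lhs => rw [P.as_sum]
  conv_rhs => rw [P.as_sum]
  rw [map_sum, map_sum, Finset.mul_sum]
  refine Finset.sum_congr rfl fun u hu => ?_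
  obtain ⟨g, hg⟩ := exists_monomial_eq_X_pow_mul_rename (h u hu) (coeff u P)
  rw [hg, evalLambdaOne_X_pow_mul_rename]

theorem scaleByLambda_eq_X_pow_mul_rename_iff [Fintype ι] [IsDomain R] [CharZero R] (m : ℕ)
    (f : MvPolynomial (ι × ℕ) R) :
    scaleByLambda ι R f = X (none, 0) ^ m * rename (Prod.map some id) f ↔
      ∀ r, (∑ j, eulerOp j r) f = if r = 0 then (m : MvPolynomial (ι × ℕ) R) * f else 0 := by
  constructor
  · intro hf r
    rw [← evalLambdaOne_scaleByLambda ((∑ j, eulerOp j r) f), scaleByLambda_sum_eulerOp, hf,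
      eulerOp_none_X_pow_mul_rename]
    split_ifs
    · rw [map_mul, map_natCast, evalLambdaOne_X_pow_mul_rename]
    · rw [map_zero]
  · intro hf
    have hscale : ∀ r, eulerOp none r (scaleByLambda ι R f) =
        if r = 0 then (m : MvPolynomial (Option ι × ℕ) R) * scaleByLambda ι R f else 0 := by
      intro r
      rw [← scaleByLambda_sum_eulerOp, hf, apply_ite (scaleByLambda ι R), map_mul, map_natCast,
        map_zero]
    rw [eq_X_pow_mul_rename_evalLambdaOne fun u hu => apply_eq_of_mem_support_of_eulerOp hscale hu,
      evalLambdaOne_scaleByLambda]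

end MvPolynomial

/-- **Kolchin's differential analogue of Euler's theorem.**  Model the differential
polynomial ring `K{y₀,…,yₙ}` as `K[y_j^{(k)} : 0 ≤ j ≤ n, k ∈ ℕ]`, i.e. as
`MvPolynomial (Fin (n+1) × ℕ) K`, and `K{λ, y₀,…,yₙ}` with variables indexed by
`Option (Fin (n+1)) × ℕ` (`(none, i)` standing for `λ^{(i)}`).  Substituting
`y_j^{(k)} ↦ δ^k(λ y_j) = ∑_{i ≤ k} C(k,i) λ^{(i)} y_j^{(k-i)}` defines
`f(λy₀,…,λyₙ)`.  Then `f` is differentially homogeneous of degree `m`, i.e.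
`f(λy₀,…,λyₙ) = λ^m f(y₀,…,yₙ)`, if and only if for every `r ∈ ℕ`:
`∑_{j,k} C(k+r,r) · y_j^{(k)} · ∂f/∂y_j^{(k+r)}` equals `m·f` when `r = 0` and `0`
when `r ≠ 0`. -/
theorem stmt14 (K : Type*) [Field K] [CharZero K] (n m : ℕ)
    (f : MvPolynomial (Fin (n + 1) × ℕ) K) :
    (aeval (fun v : Fin (n + 1) × ℕ =>
        ∑ i ∈ Finset.range (v.2 + 1),
          (Nat.choose v.2 i : MvPolynomial (Option (Fin (n + 1)) × ℕ) K) *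
            X ((none : Option (Fin (n + 1))), i) * X (some v.1, v.2 - i)) f
      = X ((none : Option (Fin (n + 1))), 0) ^ m *
          rename (fun v : Fin (n + 1) × ℕ => ((some v.1 : Option (Fin (n + 1))), v.2)) f)
    ↔ ∀ r : ℕ,
        (∑ᶠ (j : Fin (n + 1)) (k : ℕ),
            (Nat.choose (k + r) r : MvPolynomial (Fin (n + 1) × ℕ) K) *
              (X (j, k) * pderiv (j, k + r) f))
          = if r = 0 then (m : MvPolynomial (Fin (n + 1) × ℕ) K) * f else 0 := by
  refine (scaleByLambda_eq_X_pow_mul_rename_iff m f).trans (forall_congr' fun r => ?_)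
  rw [sum_eulerOp_apply, ← finsum_eq_sum_of_fintype]
  rfl
end

section
/- Let R = K{Y, Y^{-1}} be the ring of Laurent differential polynomials over a differential field K of characteristic zero in differential indeterminates Y = {y₁,…,yₙ} (i.e., finite K-linear combinations of Laurent monomials ∏_{i,k} (y_i^{(k)})^{d_{ik}} with d_{ik} ∈ ℤ). Let S be the set of finitely generated differential ideals of R, and let T be the set of differential ideals of K{Y} of the form [f₁,…,f_r] : 𝔪, where 𝔪 is the multiplicative set of all differential monomials in Y. Define φ: S → T by φ([F₁,…,F_s]) = [M₁F₁,…,M_sF_s] : 𝔪 for any choice of differential monomials M_i with M_iF_i ∈ K{Y}, and ψ: T → S by ψ([f₁,…,f_r] : 𝔪) = [f₁,…,f_r] (the differential ideal generated in R). Then φ is well defined (independent of the choice of the M_i), and φ and ψ are mutually inverse bijections: φ∘ψ = id_T and ψ∘φ = id_S. -/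
open MvPolynomial

set_option maxHeartbeats 1000000
set_option synthInstance.maxHeartbeats 400000

/-- The differential ideal generated by a set `G` in a ring with derivation `δ`:
the smallest ideal containing `G` and stable under `δ`. -/
def dgen {R : Type*} [CommRing R] (δ : R → R) (G : Set R) : Ideal R :=
  sInf {I : Ideal R | G ⊆ I ∧ ∀ x ∈ I, δ x ∈ I}

/-- The saturation `I : Mon` of an ideal `I` by a multiplicative monoid `Mon`:
all `f` with `m * f ∈ I` for some `m ∈ Mon`. -/
def satSet {R : Type*} [CommRing R] (Mon : Submonoid R) (I : Ideal R) : Set R :=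
  {f | ∃ m ∈ Mon, m * f ∈ I}

section Aux

variable {R : Type*} [CommRing R]

lemma subset_dgen (δ : R → R) (G : Set R) : G ⊆ dgen δ G := fun x hx =>
  Ideal.mem_sInf.2 fun {_} hI => hI.1 hx

lemma dgen_stable (δ : R → R) (G : Set R) : ∀ x ∈ dgen δ G, δ x ∈ dgen δ G :=
  fun x hx => Ideal.mem_sInf.2 fun {_} hI => hI.2 x (Ideal.mem_sInf.1 hx hI)

lemma dgen_le {δ : R → R} {G : Set R} {I : Ideal R} (hG : G ⊆ I)
    (hI : ∀ x ∈ I, δ x ∈ I) : dgen δ G ≤ I := sInf_le ⟨hG, hI⟩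

def satIdeal (Mon : Submonoid R) (I : Ideal R) : Ideal R where
  carrier := satSet Mon I
  zero_mem' := ⟨1, one_mem _, by simp⟩
  add_mem' := by
    rintro a b ⟨m, hm, hma⟩ ⟨m', hm', hmb⟩
    refine ⟨m * m', mul_mem hm hm', ?_⟩
    have h : m * m' * (a + b) = m' * (m * a) + m * (m' * b) := by ring
    rw [h]
    exact add_mem (Ideal.mul_mem_left _ _ hma) (Ideal.mul_mem_left _ _ hmb)
  smul_mem' := by
    rintro c a ⟨m, hm, hma⟩
    refine ⟨m, hm, ?_⟩
    have h : m * (c • a) = c * (m * a) := by rw [smul_eq_mul]; ring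
    rw [h]
    exact Ideal.mul_mem_left _ _ hma

lemma mem_satSet_of_mem {Mon : Submonoid R} {I : Ideal R} {x : R} (hx : x ∈ I) :
    x ∈ satSet Mon I := ⟨1, one_mem _, by simpa using hx⟩

lemma satSet_mono {Mon : Submonoid R} {I J : Ideal R} (h : I ≤ J) :
    satSet Mon I ⊆ satSet Mon J := fun _ ⟨m, hm, hmx⟩ => ⟨m, hm, h hmx⟩

lemma satSet_satIdeal (Mon : Submonoid R) (I : Ideal R) :
    satSet Mon (satIdeal Mon I) = satSet Mon I := by
  ext x
  constructor
  · rintro ⟨m, hm, m', hm', h⟩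
    exact ⟨m' * m, mul_mem hm' hm, by rwa [mul_assoc]⟩
  · exact fun hx => mem_satSet_of_mem hx

lemma satIdeal_stable (Mon : Submonoid R) {I : Ideal R} (δ : Derivation ℤ R R)
    (hI : ∀ x ∈ I, δ x ∈ I) :
    ∀ x ∈ satIdeal Mon I, δ x ∈ satIdeal Mon I := by
  rintro x ⟨m, hm, hmx⟩
  refine ⟨m * m, mul_mem hm hm, ?_⟩
  have hle : δ (m * x) = m * δ x + x * δ m := by
    rw [Derivation.leibniz]; simp [smul_eq_mul]
  have key : m * m * δ x = m * δ (m * x) - δ m * (m * x) := by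
    rw [hle]; ring
  rw [key]
  exact sub_mem (Ideal.mul_mem_left _ _ (hI _ hmx)) (Ideal.mul_mem_left _ _ hmx)

lemma satSet_dgen_le (Mon : Submonoid R) (δ : Derivation ℤ R R) {A B : Set R}
    (h : A ⊆ satSet Mon (dgen (⇑δ) B)) :
    satSet Mon (dgen (⇑δ) A) ⊆ satSet Mon (dgen (⇑δ) B) := by
  have hle : dgen (⇑δ) A ≤ satIdeal Mon (dgen (⇑δ) B) :=
    dgen_le h (satIdeal_stable Mon δ (dgen_stable (⇑δ) B))
  calc satSet Mon (dgen (⇑δ) A) ⊆ satSet Mon (satIdeal Mon (dgen (⇑δ) B)) :=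
        satSet_mono hle
    _ = satSet Mon (dgen (⇑δ) B) := satSet_satIdeal Mon _

end Aux

/-- **Correspondence between Laurent differential ideals and saturated differential
ideals.**  Model `K{Y} = K[y_i^{(k)}]` as `S = MvPolynomial (Fin n × ℕ) K` and the
Laurent differential polynomial ring `K{Y,Y⁻¹}` as the localization `L` of `S` at
the monoid `Mon` of differential monomials; `δS`, `δL` are the derivations with
`δ y_i^{(k)} = y_i^{(k+1)}` extending a derivation `dK` of `K`, and `ρ : S → L`
the canonical map.  Then: every `F ∈ L` has a monomial multiple in the image of
`S`; the map `φ([F₁,…,F_s]) = [M₁F₁,…,M_sF_s] : Mon` is independent of the choice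
of monomials `Mᵢ`; and `φ`, `ψ` (where `ψ([f₁,…,f_r]:Mon) = [f₁,…,f_r]` in `L`)
are mutually inverse: `ψ ∘ φ = id` and `φ ∘ ψ = id`. -/
theorem stmt17 (K : Type*) [Field K] [CharZero K] (n : ℕ)
    (dK : Derivation ℚ K K)
    (Mon : Submonoid (MvPolynomial (Fin n × ℕ) K))
    (hMon : Mon = Submonoid.closure
      (Set.range (fun v : Fin n × ℕ => (X v : MvPolynomial (Fin n × ℕ) K))))
    (δS : Derivation ℤ (MvPolynomial (Fin n × ℕ) K) (MvPolynomial (Fin n × ℕ) K))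
    (hδSX : ∀ (j : Fin n) (k : ℕ), δS (X (j, k)) = X (j, k + 1))
    (hδSC : ∀ c : K, δS (C c) = C (dK c))
    (δL : Derivation ℤ (Localization Mon) (Localization Mon))
    (hδL : ∀ p : MvPolynomial (Fin n × ℕ) K,
      δL (algebraMap _ (Localization Mon) p) = algebraMap _ (Localization Mon) (δS p)) :
    -- every Laurent differential polynomial has a monomial multiple in the image of S
    (∀ F : Localization Mon, ∃ m ∈ Mon, ∃ g : MvPolynomial (Fin n × ℕ) K,
        algebraMap _ (Localization Mon) m * F = algebraMap _ (Localization Mon) g)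
    -- φ is well defined: independent of the choice of monomial multipliers
    ∧ (∀ (s : ℕ) (Fv : Fin s → Localization Mon)
        (M g M' g' : Fin s → MvPolynomial (Fin n × ℕ) K),
        (∀ i, M i ∈ Mon) →
        (∀ i, algebraMap _ (Localization Mon) (M i) * Fv i =
          algebraMap _ (Localization Mon) (g i)) →
        (∀ i, M' i ∈ Mon) →
        (∀ i, algebraMap _ (Localization Mon) (M' i) * Fv i =
          algebraMap _ (Localization Mon) (g' i)) →
        satSet Mon (dgen (⇑δS) (Set.range g)) = satSet Mon (dgen (⇑δS) (Set.range g')))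
    -- ψ ∘ φ = id
    ∧ (∀ (s : ℕ) (Fv : Fin s → Localization Mon)
        (M g : Fin s → MvPolynomial (Fin n × ℕ) K),
        (∀ i, M i ∈ Mon) →
        (∀ i, algebraMap _ (Localization Mon) (M i) * Fv i =
          algebraMap _ (Localization Mon) (g i)) →
        dgen (⇑δL) (Set.range (fun i => algebraMap _ (Localization Mon) (g i))) =
          dgen (⇑δL) (Set.range Fv))
    -- φ ∘ ψ = id
    ∧ (∀ (r : ℕ) (f M g : Fin r → MvPolynomial (Fin n × ℕ) K),
        (∀ i, M i ∈ Mon) →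
        (∀ i, algebraMap _ (Localization Mon) (M i) *
            algebraMap _ (Localization Mon) (f i) =
          algebraMap _ (Localization Mon) (g i)) →
        satSet Mon (dgen (⇑δS) (Set.range g)) = satSet Mon (dgen (⇑δS) (Set.range f))) := by
  set S := MvPolynomial (Fin n × ℕ) K
  set ρ : S →+* Localization Mon := algebraMap S (Localization Mon) with hρ
  -- Mon contains no zero divisors
  have hMonNe : ∀ m ∈ Mon, m ≠ 0 := by
    intro m hm
    rw [hMon] at hm
    induction hm using Submonoid.closure_induction with
    | mem x hx =>
      obtain ⟨v, rfl⟩ := hx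
      exact MvPolynomial.X_ne_zero v
    | one => exact one_ne_zero
    | mul a b _ _ ha hb => exact mul_ne_zero ha hb
  have hle : Mon ≤ nonZeroDivisors S := fun m hm =>
    mem_nonZeroDivisors_of_ne_zero (hMonNe m hm)
  have hinj : Function.Injective ρ := IsLocalization.injective (Localization Mon) hle
  refine ⟨?_, ?_, ?_, ?_⟩
  · -- part 1
    intro F
    obtain ⟨⟨a, m⟩, h⟩ := IsLocalization.surj Mon F
    exact ⟨m, m.2, a, by rw [mul_comm]; exact h⟩
  · -- part 2
    intro s Fv M g M' g' hM hg hM' hg'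
    have key : ∀ (M g M' g' : Fin s → S),
        (∀ i, M i ∈ Mon) →
        (∀ i, ρ (M i) * Fv i = ρ (g i)) →
        (∀ i, M' i ∈ Mon) →
        (∀ i, ρ (M' i) * Fv i = ρ (g' i)) →
        satSet Mon (dgen (⇑δS) (Set.range g')) ⊆ satSet Mon (dgen (⇑δS) (Set.range g)) := by
      intro M g M' g' hM hg hM' hg'
      refine satSet_dgen_le Mon δS ?_
      rintro _ ⟨i, rfl⟩
      have hcross : M i * g' i = M' i * g i := by
        apply hinj
        rw [map_mul, map_mul, ← hg i, ← hg' i]; ring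
      exact ⟨M i, hM i, hcross ▸ Ideal.mul_mem_left _ _ (subset_dgen _ _ ⟨i, rfl⟩)⟩
    exact Set.Subset.antisymm (key M' g' M g hM' hg' hM hg) (key M g M' g' hM hg hM' hg')
  · -- part 3
    intro s Fv M g hM hg
    apply le_antisymm
    · refine dgen_le ?_ (dgen_stable _ _)
      rintro _ ⟨i, rfl⟩
      show ρ (g i) ∈ dgen (⇑δL) (Set.range Fv)
      rw [← hg i]
      exact Ideal.mul_mem_left _ _ (subset_dgen _ _ ⟨i, rfl⟩)
    · refine dgen_le ?_ (dgen_stable _ _)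
      rintro _ ⟨i, rfl⟩
      obtain ⟨u, hu⟩ := IsLocalization.map_units (Localization Mon) (⟨M i, hM i⟩ : Mon)
      have hu' : (u : Localization Mon) = ρ (M i) := hu
      have : Fv i = ↑u⁻¹ * ρ (g i) := by
        rw [← hg i, ← hu', ← mul_assoc, Units.inv_mul, one_mul]
      rw [this]
      exact Ideal.mul_mem_left _ _ (subset_dgen _ _ ⟨i, rfl⟩)
  · -- part 4
    intro r f M g hM hfg
    have heq : ∀ i, M i * f i = g i := fun i => hinj (by rw [map_mul]; exact hfg i)
    apply Set.Subset.antisymm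
    · refine satSet_dgen_le Mon δS ?_
      rintro _ ⟨i, rfl⟩
      refine ⟨1, one_mem _, ?_⟩
      rw [one_mul, ← heq i]
      exact Ideal.mul_mem_left _ _ (subset_dgen _ _ ⟨i, rfl⟩)
    · refine satSet_dgen_le Mon δS ?_
      rintro _ ⟨i, rfl⟩
      refine ⟨M i, hM i, ?_⟩
      rw [heq i]
      exact subset_dgen _ _ ⟨i, rfl⟩
end
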